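/- Right multiplication of the combining matrix by an invertible matrix does not change the achievable SE: for V ∈ ℂ^{M×N}, invertible T ∈ ℂ^{N×N}, Ĥ ∈ ℂ^{M×N}, Hermitian positive definite Ξ ∈ ℂ^{M×M}, and Hermitian PSD P, if V^H Ξ V is invertible then log₂ det(I_N + P^{1/2}Ĥ^H (VT) ((VT)^H Ξ (VT))^{-1} (VT)^H Ĥ P^{1/2}) = log₂ det(I_N + P^{1/2}Ĥ^H V (V^H Ξ V)^{-1} V^H Ĥ P^{1/2}). -/

import Mathlib

/-! The SE depends on the combiner `V` only through `V (Vᴴ Ξ V)⁻¹ Vᴴ`. Replacing `V` by `V T`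
turns the Gram matrix `Vᴴ Ξ V` into `Tᴴ (Vᴴ Ξ V) T`, and the outer factors `T` and `Tᴴ` cancel
against the inverse. -/

open Matrix ComplexOrder

/-- The positive semidefinite square root of a positive semidefinite matrix
(the definition of `Matrix.PosSemidef.sqrt` in the older Mathlib). -/
noncomputable def Matrix.PosSemidef.sqrt {n : Type*} [Fintype n] [DecidableEq n]
    {𝕜 : Type*} [RCLike 𝕜] {A : Matrix n n 𝕜} (hA : A.PosSemidef) : Matrix n n 𝕜 :=
  hA.1.eigenvectorUnitary.1 * diagonal ((↑) ∘ (√·) ∘ hA.1.eigenvalues) *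
  (star hA.1.eigenvectorUnitary : Matrix n n 𝕜)

namespace Matrix

variable {m n R : Type*} [Fintype m] [Fintype n] [DecidableEq n]

theorem mul_inv_mul_mul_mul_eq_inv [CommRing R] {S T : Matrix n n R} (hS : IsUnit S)
    (hT : IsUnit T) (A : Matrix n n R) : T * (S * A * T)⁻¹ * S = A⁻¹ := by
  have hS' : IsUnit S.det := (isUnit_iff_isUnit_det S).mp hS
  have hT' : IsUnit T.det := (isUnit_iff_isUnit_det T).mp hT
  rw [mul_inv_rev, mul_inv_rev]
  calc T * (T⁻¹ * (A⁻¹ * S⁻¹)) * S = (T * T⁻¹) * A⁻¹ * (S⁻¹ * S) := by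
        simp only [Matrix.mul_assoc]
    _ = A⁻¹ := by
        rw [mul_nonsing_inv _ hT', nonsing_inv_mul _ hS', Matrix.one_mul, Matrix.mul_one]

noncomputable def weightedProj [CommRing R] [StarRing R] (Xi : Matrix m m R)
    (V : Matrix m n R) : Matrix m m R :=
  V * (Vᴴ * Xi * V)⁻¹ * Vᴴ

theorem weightedProj_mul_right [CommRing R] [StarRing R] (Xi : Matrix m m R)
    (V : Matrix m n R) {T : Matrix n n R} (hT : IsUnit T) :
    weightedProj Xi (V * T) = weightedProj Xi V := by
  have hTH : IsUnit Tᴴ := (isUnit_conjTranspose T).mpr hT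
  have hconj : (V * T)ᴴ * Xi * (V * T) = Tᴴ * (Vᴴ * Xi * V) * T := by
    simp only [conjTranspose_mul, Matrix.mul_assoc]
  calc weightedProj Xi (V * T) = V * (T * (Tᴴ * (Vᴴ * Xi * V) * T)⁻¹ * Tᴴ) * Vᴴ := by
        rw [weightedProj, hconj, conjTranspose_mul]; simp only [Matrix.mul_assoc]
    _ = weightedProj Xi V := by rw [mul_inv_mul_mul_mul_eq_inv hTH hT]; rfl

end Matrix

theorem stmt14_general (M N : ℕ) (Hh V : Matrix (Fin M) (Fin N) ℂ)
    (T : Matrix (Fin N) (Fin N) ℂ) (hT : IsUnit T)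
    (Xi : Matrix (Fin M) (Fin M) ℂ)
    (P : Matrix (Fin N) (Fin N) ℂ) (hP : P.PosSemidef) :
    Real.logb 2
      ((1 + hP.sqrt * Hhᴴ * (V * T) * ((V * T)ᴴ * Xi * (V * T))⁻¹ * (V * T)ᴴ * Hh *
          hP.sqrt).det.re) =
    Real.logb 2
      ((1 + hP.sqrt * Hhᴴ * V * (Vᴴ * Xi * V)⁻¹ * Vᴴ * Hh * hP.sqrt).det.re) := by
  have h := congrArg (fun W => hP.sqrt * Hhᴴ * W * Hh * hP.sqrt)
    (weightedProj_mul_right Xi V hT)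
  simp only [weightedProj, Matrix.mul_assoc] at h ⊢
  rw [h]

/-- Right multiplication of the combining matrix by an invertible matrix does not
change the achievable SE. -/
theorem stmt14 (M N : ℕ) (Hh V : Matrix (Fin M) (Fin N) ℂ)
    (T : Matrix (Fin N) (Fin N) ℂ) (hT : IsUnit T)
    (Xi : Matrix (Fin M) (Fin M) ℂ) (hXi : Xi.PosDef)
    (P : Matrix (Fin N) (Fin N) ℂ) (hP : P.PosSemidef)
    (hV : IsUnit (Vᴴ * Xi * V)) :
    Real.logb 2
      ((1 + hP.sqrt * Hhᴴ * (V * T) * ((V * T)ᴴ * Xi * (V * T))⁻¹ * (V * T)ᴴ * Hh *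
          hP.sqrt).det.re) =
    Real.logb 2
      ((1 + hP.sqrt * Hhᴴ * V * (Vᴴ * Xi * V)⁻¹ * Vᴴ * Hh * hP.sqrt).det.re) :=
  stmt14_general M N Hh V T hT Xi P hP
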